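/- Let p be a prime, e | p−1, and G ⊂ GL_2(F_p) be generated by the transvection x_1 ↦ x_1 − x_2 (fixing x_2) and the diagonal map x_2 ↦ ω x_2 with ω of order e. With f_1 = x_1^p − x_1 x_2^{p−1}, f_2 = x_2^e, the three polynomials h_0 = f_2^{1+e^{-1}(p^m−1)}, h_1 = Σ_{k=0}^{m−1} f_2^{1+e^{-1}(p^m − p^{m−k})} f_1^{p^{m−k−1}}, h_2 = f_1^{2p^{m−1}} all lie in the ideal (x_1^{p^m}, x_2^{p^m}) of F_p[x_1, x_2]. -/

import Mathlib

open MvPolynomial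

/-!
Write `a, b` for `x₁, x₂` and `f₁ = a ^ p - a b ^ (p - 1)`. Frobenius gives
`f₁ ^ p ^ j = a ^ p ^ (j + 1) - a ^ p ^ j b ^ ((p - 1) p ^ j)`, and since `e ∣ p ^ m - p ^ j`, every
power of `f₂ = b ^ e` that occurs is a plain power of `b`. Hence `h₀` is a power of `b` of exponent
at least `p ^ m`, the summands of `h₁` telescope to `a ^ p ^ m b ^ e - a b ^ (e + p ^ m - 1)`, and
`h₂ = (a ^ p ^ m - c) ^ 2` where `c ^ 2` is divisible by `b ^ (2 (p - 1) p ^ (m - 1))`, whose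
exponent is at least `p ^ m` because `p ≥ 2`.
-/

theorem Nat.dvd_pow_sub_pow_of_dvd_sub_one {e p j m : ℕ} (he : e ∣ p - 1) (hjm : j ≤ m) :
    e ∣ p ^ m - p ^ j := by
  have hsplit : p ^ m - p ^ j = p ^ j * (p ^ (m - j) - 1) := by
    rw [Nat.mul_sub, mul_one, ← pow_add, Nat.add_sub_cancel' hjm]
  rw [hsplit]
  exact (he.trans (Nat.sub_one_dvd_pow_sub_one p _)).mul_left _

theorem pow_pow_one_add_div_of_dvd {M : Type*} [Monoid M] (b : M) {e n : ℕ} (h : e ∣ n) :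
    (b ^ e) ^ (1 + n / e) = b ^ (e + n) := by
  rw [← pow_mul, Nat.mul_add, mul_one, Nat.mul_div_cancel' h]

theorem pow_sub_sq_mem {R : Type*} [CommRing R] {I : Ideal R} {x y : R} (hx : x ∈ I)
    (hy : y ^ 2 ∈ I) : (x - y) ^ 2 ∈ I := by
  rw [sub_sq]
  exact I.add_mem
    (I.sub_mem (I.pow_mem_of_mem hx 2 two_pos) (I.mul_mem_right _ (I.mul_mem_left _ hx))) hy

theorem pow_pow_one_add_pow_sub_one_div_mem {R : Type*} [CommRing R] {I : Ideal R} {b : R}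
    {p m e : ℕ} (hb : b ^ p ^ m ∈ I) (he0 : 0 < e) (he : e ∣ p - 1) :
    (b ^ e) ^ (1 + (p ^ m - 1) / e) ∈ I := by
  rw [pow_pow_one_add_div_of_dvd b (he.trans (Nat.sub_one_dvd_pow_sub_one p m))]
  exact I.pow_mem_of_pow_mem hb (by omega)

section Frobenius

variable {R : Type*} [CommRing R] {p : ℕ} [ExpChar R p] {I : Ideal R} {a b : R} {m e : ℕ}

theorem pow_sub_mul_pow_sub_one_pow_expChar_pow (a b : R) (j : ℕ) :
    (a ^ p - a * b ^ (p - 1)) ^ p ^ j = a ^ p ^ (j + 1) - a ^ p ^ j * b ^ ((p - 1) * p ^ j) := by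
  rw [sub_pow_expChar_pow, mul_pow, ← pow_mul, ← pow_mul, ← pow_succ']

theorem pow_pow_one_add_div_mul_pow_sub_mul_pow_sub_one_pow (he : e ∣ p - 1) {j : ℕ}
    (hjm : j + 1 ≤ m) :
    (b ^ e) ^ (1 + (p ^ m - p ^ (j + 1)) / e) * (a ^ p - a * b ^ (p - 1)) ^ p ^ j
      = a ^ p ^ (j + 1) * b ^ (e + (p ^ m - p ^ (j + 1)))
        - a ^ p ^ j * b ^ (e + (p ^ m - p ^ j)) := by
  have hp := expChar_pos R p
  have hle : p ^ (j + 1) ≤ p ^ m := Nat.pow_le_pow_right hp hjm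
  have hle' : p ^ j ≤ p ^ (j + 1) := Nat.pow_le_pow_right hp j.le_succ
  have hexp : e + (p ^ m - p ^ (j + 1)) + (p - 1) * p ^ j = e + (p ^ m - p ^ j) := by
    rw [Nat.sub_one_mul, ← pow_succ']
    omega
  rw [pow_pow_one_add_div_of_dvd b (Nat.dvd_pow_sub_pow_of_dvd_sub_one he hjm),
    pow_sub_mul_pow_sub_one_pow_expChar_pow, mul_sub, ← hexp, pow_add]
  ring

theorem sum_pow_pow_one_add_div_mul_pow_sub_mul_pow_sub_one_pow_mem (ha : a ^ p ^ m ∈ I)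
    (hb : b ^ p ^ m ∈ I) (he0 : 0 < e) (he : e ∣ p - 1) :
    ∑ k ∈ Finset.range m,
        (b ^ e) ^ (1 + (p ^ m - p ^ (m - k)) / e) * (a ^ p - a * b ^ (p - 1)) ^ p ^ (m - k - 1)
      ∈ I := by
  have hsummand : ∀ k ∈ Finset.range m,
      (b ^ e) ^ (1 + (p ^ m - p ^ (m - k)) / e) * (a ^ p - a * b ^ (p - 1)) ^ p ^ (m - k - 1)
        = a ^ p ^ (m - k) * b ^ (e + (p ^ m - p ^ (m - k)))
          - a ^ p ^ (m - (k + 1)) * b ^ (e + (p ^ m - p ^ (m - (k + 1)))) := by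
    intro k hk
    have hk : m - k = m - k - 1 + 1 := by rw [Finset.mem_range] at hk; omega
    rw [show m - (k + 1) = m - k - 1 by omega, hk]
    exact pow_pow_one_add_div_mul_pow_sub_mul_pow_sub_one_pow he (by omega)
  rw [Finset.sum_congr rfl hsummand, Finset.sum_range_sub']
  simp only [Nat.sub_zero, Nat.sub_self, pow_zero, pow_one]
  exact I.sub_mem (I.mul_mem_right _ ha) (I.mul_mem_left _ (I.pow_mem_of_pow_mem hb (by omega)))

theorem pow_sub_mul_pow_sub_one_pow_two_mul_pow_mem (ha : a ^ p ^ m ∈ I) (hb : b ^ p ^ m ∈ I)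
    (hp : 1 < p) (hm : 1 ≤ m) : (a ^ p - a * b ^ (p - 1)) ^ (2 * p ^ (m - 1)) ∈ I := by
  obtain ⟨n, rfl⟩ : ∃ n, m = n + 1 := ⟨m - 1, by omega⟩
  rw [Nat.add_sub_cancel, mul_comm 2, pow_mul, pow_sub_mul_pow_sub_one_pow_expChar_pow]
  refine pow_sub_sq_mem ha ?_
  have hexp : p ^ (n + 1) ≤ (p - 1) * p ^ n * 2 := by
    rw [pow_succ', mul_comm _ 2, ← mul_assoc]
    exact Nat.mul_le_mul_right _ (by omega)
  rw [mul_pow, ← pow_mul b]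
  exact I.mul_mem_left _ (I.pow_mem_of_pow_mem hb hexp)

end Frobenius

theorem stmt_14_general (p m e : ℕ) [Fact p.Prime] (hm : 1 ≤ m) (he0 : 0 < e) (he : e ∣ p - 1) :
    (((X 1 : MvPolynomial (Fin 2) (ZMod p)) ^ e) ^ (1 + (p ^ m - 1) / e)
        ∈ Ideal.span ({X 0 ^ p ^ m, X 1 ^ p ^ m} : Set (MvPolynomial (Fin 2) (ZMod p))))
    ∧ (∑ k ∈ Finset.range m,
          ((X 1 : MvPolynomial (Fin 2) (ZMod p)) ^ e) ^ (1 + (p ^ m - p ^ (m - k)) / e) *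
            (X 0 ^ p - X 0 * X 1 ^ (p - 1)) ^ p ^ (m - k - 1)
        ∈ Ideal.span ({X 0 ^ p ^ m, X 1 ^ p ^ m} : Set (MvPolynomial (Fin 2) (ZMod p))))
    ∧ (((X 0 : MvPolynomial (Fin 2) (ZMod p)) ^ p - X 0 * X 1 ^ (p - 1)) ^ (2 * p ^ (m - 1))
        ∈ Ideal.span ({X 0 ^ p ^ m, X 1 ^ p ^ m} : Set (MvPolynomial (Fin 2) (ZMod p)))) := by
  have hX0 : (X 0 : MvPolynomial (Fin 2) (ZMod p)) ^ p ^ m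
      ∈ Ideal.span ({X 0 ^ p ^ m, X 1 ^ p ^ m} : Set (MvPolynomial (Fin 2) (ZMod p))) :=
    Ideal.subset_span (by simp)
  have hX1 : (X 1 : MvPolynomial (Fin 2) (ZMod p)) ^ p ^ m
      ∈ Ideal.span ({X 0 ^ p ^ m, X 1 ^ p ^ m} : Set (MvPolynomial (Fin 2) (ZMod p))) :=
    Ideal.subset_span (by simp)
  exact ⟨pow_pow_one_add_pow_sub_one_div_mem hX1 he0 he,
    sum_pow_pow_one_add_div_mul_pow_sub_mul_pow_sub_one_pow_mem hX0 hX1 he0 he,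
    pow_sub_mul_pow_sub_one_pow_two_mul_pow_mem hX0 hX1 (Fact.out : p.Prime).one_lt hm⟩

/-- In `F_p[x_1,x_2]` (variables `X 0, X 1`), with `f_1 = x_1^p − x_1 x_2^{p−1}` and
`f_2 = x_2^e` where `e ∣ p−1`, the three polynomials `h_0, h_1, h_2` lie in the ideal
`(x_1^{p^m}, x_2^{p^m})`. -/
theorem stmt_14 (p m e : ℕ) [Fact p.Prime] (hm : 1 ≤ m) (he0 : 0 < e) (he : e ∣ p - 1)
    (ω : (ZMod p)ˣ) (hω : orderOf ω = e) :
    (((X 1 : MvPolynomial (Fin 2) (ZMod p)) ^ e) ^ (1 + (p ^ m - 1) / e)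
        ∈ Ideal.span ({X 0 ^ p ^ m, X 1 ^ p ^ m} : Set (MvPolynomial (Fin 2) (ZMod p))))
    ∧ (∑ k ∈ Finset.range m,
          ((X 1 : MvPolynomial (Fin 2) (ZMod p)) ^ e) ^ (1 + (p ^ m - p ^ (m - k)) / e) *
            (X 0 ^ p - X 0 * X 1 ^ (p - 1)) ^ p ^ (m - k - 1)
        ∈ Ideal.span ({X 0 ^ p ^ m, X 1 ^ p ^ m} : Set (MvPolynomial (Fin 2) (ZMod p))))
    ∧ (((X 0 : MvPolynomial (Fin 2) (ZMod p)) ^ p - X 0 * X 1 ^ (p - 1)) ^ (2 * p ^ (m - 1))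
        ∈ Ideal.span ({X 0 ^ p ^ m, X 1 ^ p ^ m} : Set (MvPolynomial (Fin 2) (ZMod p)))) :=
  stmt_14_general p m e hm he0 he
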